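/- arXiv:2407.18833 — 3 statements merged into one kernel-verified Lean document; each statement's English description precedes it below -/
import Mathlib

section
/- (Theorem 3, 'if' direction, constructive form) Suppose the historical data are generated by Σ and satisfy the Assumption. Let Ψ = [V_p V_f W_p W_f R_p R_f] ∈ ℝ^{q×2(n+m+p)} be a matrix whose kernel equals the column space of Φ_d, and suppose there exist Ω ∈ ℝ^{n×q} and a Schur stable matrix A* ∈ ℝ^{n×n} with Ω V_p = −A* and Ω V_f = I_n. Define S₃ = −Ω W_p, S₄ = −Ω W_f, S₅ = −Ω R_p, S₆ = −Ω R_f. Then the observer candidate Σ̂ with matrices A_UIO = A*, Du = S₄, Bu = S₃ + A* S₄, Dy = S₆, By = S₅ + A* S₆ is a UIO for Σ. -/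
open Matrix Filter

noncomputable section

/-- A real square matrix is Schur stable if all its complex eigenvalues
have modulus strictly less than 1. -/
def SchurStable {n : ℕ} (M : Matrix (Fin n) (Fin n) ℝ) : Prop :=
  ∀ μ ∈ spectrum ℂ (M.map (algebraMap ℝ ℂ)), ‖μ‖ < 1

/-- `(x, u, y, d)` is a solution of the system `Σ`:
`x(t+1) = A x(t) + B u(t) + E d(t)`, `y(t) = C x(t) + D u(t) + F d(t)`. -/
def SigmaSol {n m p r : ℕ}
    (A : Matrix (Fin n) (Fin n) ℝ) (B : Matrix (Fin n) (Fin m) ℝ)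
    (Cm : Matrix (Fin p) (Fin n) ℝ) (Dm : Matrix (Fin p) (Fin m) ℝ)
    (E : Matrix (Fin n) (Fin r) ℝ) (F : Matrix (Fin p) (Fin r) ℝ)
    (x : ℕ → Fin n → ℝ) (u : ℕ → Fin m → ℝ) (y : ℕ → Fin p → ℝ)
    (d : ℕ → Fin r → ℝ) : Prop :=
  ∀ t : ℕ,
    x (t + 1) = A.mulVec (x t) + B.mulVec (u t) + E.mulVec (d t) ∧
    y t = Cm.mulVec (x t) + Dm.mulVec (u t) + F.mulVec (d t)

/-- `(x̂, u, y, z)` is a solution of the observer candidate `Σ̂`: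
`z(t+1) = A_UIO z(t) + Bu u(t) + By y(t)`, `x̂(t) = z(t) + Du u(t) + Dy y(t)`. -/
def ObsSol {n m p : ℕ}
    (Auio : Matrix (Fin n) (Fin n) ℝ) (Bu : Matrix (Fin n) (Fin m) ℝ)
    (By : Matrix (Fin n) (Fin p) ℝ) (Du : Matrix (Fin n) (Fin m) ℝ)
    (Dy : Matrix (Fin n) (Fin p) ℝ)
    (xh : ℕ → Fin n → ℝ) (u : ℕ → Fin m → ℝ) (y : ℕ → Fin p → ℝ)
    (z : ℕ → Fin n → ℝ) : Prop :=
  ∀ t : ℕ,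
    z (t + 1) = Auio.mulVec (z t) + Bu.mulVec (u t) + By.mulVec (y t) ∧
    xh t = z t + Du.mulVec (u t) + Dy.mulVec (y t)

/-- `Σ̂` is an acceptor for `Σ`: every solution of `Σ` can be tracked exactly. -/
def IsAcceptor {n m p r : ℕ}
    (A : Matrix (Fin n) (Fin n) ℝ) (B : Matrix (Fin n) (Fin m) ℝ)
    (Cm : Matrix (Fin p) (Fin n) ℝ) (Dm : Matrix (Fin p) (Fin m) ℝ)
    (E : Matrix (Fin n) (Fin r) ℝ) (F : Matrix (Fin p) (Fin r) ℝ)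
    (Auio : Matrix (Fin n) (Fin n) ℝ) (Bu : Matrix (Fin n) (Fin m) ℝ)
    (By : Matrix (Fin n) (Fin p) ℝ) (Du : Matrix (Fin n) (Fin m) ℝ)
    (Dy : Matrix (Fin n) (Fin p) ℝ) : Prop :=
  ∀ (x : ℕ → Fin n → ℝ) (u : ℕ → Fin m → ℝ) (y : ℕ → Fin p → ℝ)
    (d : ℕ → Fin r → ℝ), SigmaSol A B Cm Dm E F x u y d →
      ∃ z : ℕ → Fin n → ℝ, ObsSol Auio Bu By Du Dy x u y z

/-- `Σ̂` is an unknown-input observer (UIO) for `Σ`: it is an acceptor and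
the estimation error tends to zero for all matching solutions. -/
def IsUIO {n m p r : ℕ}
    (A : Matrix (Fin n) (Fin n) ℝ) (B : Matrix (Fin n) (Fin m) ℝ)
    (Cm : Matrix (Fin p) (Fin n) ℝ) (Dm : Matrix (Fin p) (Fin m) ℝ)
    (E : Matrix (Fin n) (Fin r) ℝ) (F : Matrix (Fin p) (Fin r) ℝ)
    (Auio : Matrix (Fin n) (Fin n) ℝ) (Bu : Matrix (Fin n) (Fin m) ℝ)
    (By : Matrix (Fin n) (Fin p) ℝ) (Du : Matrix (Fin n) (Fin m) ℝ)
    (Dy : Matrix (Fin n) (Fin p) ℝ) : Prop :=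
  IsAcceptor A B Cm Dm E F Auio Bu By Du Dy ∧
  ∀ (x : ℕ → Fin n → ℝ) (u : ℕ → Fin m → ℝ) (y : ℕ → Fin p → ℝ)
    (d : ℕ → Fin r → ℝ) (xh : ℕ → Fin n → ℝ) (z : ℕ → Fin n → ℝ),
      SigmaSol A B Cm Dm E F x u y d → ObsSol Auio Bu By Du Dy xh u y z →
      Tendsto (fun t => x t - xh t) atTop (nhds 0)

/-- Row index type of the data matrix `Φ_d = [X_p; X_f; U_p; U_f; Y_p; Y_f]`. -/
abbrev RowIdx (n m p : ℕ) := (Fin n ⊕ Fin n) ⊕ ((Fin m ⊕ Fin m) ⊕ (Fin p ⊕ Fin p))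

/-- The data matrix `Φ_d = [X_p; X_f; U_p; U_f; Y_p; Y_f] ∈ ℝ^{2(n+m+p)×(T−1)}`. -/
def PhiD {n m p : ℕ} (T : ℕ) (xd : ℕ → Fin n → ℝ) (ud : ℕ → Fin m → ℝ)
    (yd : ℕ → Fin p → ℝ) : Matrix (RowIdx n m p) (Fin (T - 1)) ℝ :=
  Matrix.of fun i j =>
    match i with
    | Sum.inl (Sum.inl a) => xd j.1 a
    | Sum.inl (Sum.inr a) => xd (j.1 + 1) a
    | Sum.inr (Sum.inl (Sum.inl a)) => ud j.1 a
    | Sum.inr (Sum.inl (Sum.inr a)) => ud (j.1 + 1) a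
    | Sum.inr (Sum.inr (Sum.inl a)) => yd j.1 a
    | Sum.inr (Sum.inr (Sum.inr a)) => yd (j.1 + 1) a

/-- The stacked vector `(x(t), x(t+1), u(t), u(t+1), y(t), y(t+1))`. -/
def stackVec {n m p : ℕ} (x : ℕ → Fin n → ℝ) (u : ℕ → Fin m → ℝ)
    (y : ℕ → Fin p → ℝ) (t : ℕ) : RowIdx n m p → ℝ :=
  fun i =>
    match i with
    | Sum.inl (Sum.inl a) => x t a
    | Sum.inl (Sum.inr a) => x (t + 1) a
    | Sum.inr (Sum.inl (Sum.inl a)) => u t a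
    | Sum.inr (Sum.inl (Sum.inr a)) => u (t + 1) a
    | Sum.inr (Sum.inr (Sum.inl a)) => y t a
    | Sum.inr (Sum.inr (Sum.inr a)) => y (t + 1) a

/-- The matrix `[X_p; U_p; U_f; D_p; D_f]` appearing in the Assumption. -/
def HistMat {n m r : ℕ} (T : ℕ) (xd : ℕ → Fin n → ℝ) (ud : ℕ → Fin m → ℝ)
    (dd : ℕ → Fin r → ℝ) :
    Matrix (Fin n ⊕ ((Fin m ⊕ Fin m) ⊕ (Fin r ⊕ Fin r))) (Fin (T - 1)) ℝ :=
  Matrix.of fun i j =>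
    match i with
    | Sum.inl a => xd j.1 a
    | Sum.inr (Sum.inl (Sum.inl a)) => ud j.1 a
    | Sum.inr (Sum.inl (Sum.inr a)) => ud (j.1 + 1) a
    | Sum.inr (Sum.inr (Sum.inl a)) => dd j.1 a
    | Sum.inr (Sum.inr (Sum.inr a)) => dd (j.1 + 1) a

/-! Every window `(x(t), x(t+1), u(t), u(t+1), y(t), y(t+1))` of a solution of `Σ` is the image of
the window `(x(t), u(t), u(t+1), d(t), d(t+1))` under one fixed linear map `oneStep`. Applied to the
data this factors `Φ_d` through `[X_p; U_p; U_f; D_p; D_f]`, which is onto by the Assumption, so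
every window of every solution lies in the column space of `Φ_d`, i.e. in `ker Ψ`. Multiplying
`Ψ · window = 0` by `Ω` yields `x(t+1) = A* x(t) + S₃ u(t) + S₄ u(t+1) + S₅ y(t) + S₆ y(t+1)`: hence
`z = x - S₄ u - S₆ y` runs the observer exactly, and any observer error obeys `e(t+1) = A* e(t)`,
which tends to zero by Gelfand's formula. -/

open scoped NNReal ENNReal Topology

theorem tendsto_pow_atTop_nhds_zero_of_forall_spectrum_norm_lt_one {𝔸 : Type*} [NormedRing 𝔸]
    [NormedAlgebra ℂ 𝔸] [CompleteSpace 𝔸] (a : 𝔸) (h : ∀ z ∈ spectrum ℂ a, ‖z‖ < 1) :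
    Tendsto (a ^ ·) atTop (𝓝 0) := by
  rcases subsingleton_or_nontrivial 𝔸 with _ | _
  · simp [Subsingleton.elim _ (0 : 𝔸)]
  have hρ : spectralRadius ℂ a < (1 : ℝ≥0) :=
    spectrum.spectralRadius_lt_of_forall_lt a fun z hz => by exact_mod_cast h z hz
  obtain ⟨c, hρc, hc1⟩ := ENNReal.lt_iff_exists_nnreal_btwn.mp hρ
  replace hc1 : (c : ℝ) < 1 := by exact_mod_cast hc1
  -- Gelfand's formula: eventually `‖a ^ t‖ ^ (1 / t) < c`, i.e. `‖a ^ t‖ ≤ c ^ t`.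
  have hbound : ∀ᶠ t : ℕ in atTop, ‖a ^ t‖ ≤ (c : ℝ) ^ t := by
    filter_upwards [(spectrum.pow_nnnorm_pow_one_div_tendsto_nhds_spectralRadius a).eventually
      (gt_mem_nhds hρc), eventually_ge_atTop 1] with t ht ht1
    have htpos : (0 : ℝ) < t := by exact_mod_cast ht1
    have := ENNReal.rpow_lt_rpow ht htpos
    rw [← ENNReal.rpow_mul, one_div, inv_mul_cancel₀ htpos.ne', ENNReal.rpow_one,
      ENNReal.rpow_natCast, ← ENNReal.coe_pow, ENNReal.coe_lt_coe] at this
    exact_mod_cast this.le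
  exact squeeze_zero_norm' hbound (tendsto_pow_atTop_nhds_zero_of_lt_one c.coe_nonneg hc1)

theorem SchurStable.tendsto_pow {n : ℕ} {M : Matrix (Fin n) (Fin n) ℝ} (hM : SchurStable M) :
    Tendsto (M ^ ·) atTop (𝓝 0) := by
  -- Any algebra norm on complex matrices induces their usual topology, which is all we need.
  let _ := Matrix.linftyOpNormedRing (n := Fin n) (α := ℂ)
  let _ := Matrix.linftyOpNormedAlgebra (n := Fin n) (R := ℂ) (α := ℂ)
  have hC := tendsto_pow_atTop_nhds_zero_of_forall_spectrum_norm_lt_one _ hM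
  have hre := ((continuous_id.matrix_map Complex.continuous_re).tendsto 0).comp hC
  convert hre using 2 with t
  · rw [Function.comp_apply, ← Matrix.map_pow]
    ext i j
    simp
  · simp

theorem SchurStable.tendsto_pow_mulVec {n : ℕ} {M : Matrix (Fin n) (Fin n) ℝ} (hM : SchurStable M)
    (v : Fin n → ℝ) : Tendsto (fun t : ℕ => (M ^ t) *ᵥ v) atTop (𝓝 0) := by
  have h := ((continuous_id.matrix_mulVec (continuous_const (y := v))).tendsto 0).comp
    hM.tendsto_pow
  rwa [id, zero_mulVec] at h

section Observer

variable {n m p r : ℕ} {A : Matrix (Fin n) (Fin n) ℝ} {B : Matrix (Fin n) (Fin m) ℝ}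
  {Cm : Matrix (Fin p) (Fin n) ℝ} {Dm : Matrix (Fin p) (Fin m) ℝ}
  {E : Matrix (Fin n) (Fin r) ℝ} {F : Matrix (Fin p) (Fin r) ℝ}
  {Astar : Matrix (Fin n) (Fin n) ℝ} {S3 S4 : Matrix (Fin n) (Fin m) ℝ}
  {S5 S6 : Matrix (Fin n) (Fin p) ℝ} {x : ℕ → Fin n → ℝ} {u : ℕ → Fin m → ℝ} {y : ℕ → Fin p → ℝ}

theorem obsSol_of_recursion
    (hrec : ∀ t, x (t + 1) = Astar *ᵥ x t + S3 *ᵥ u t + S4 *ᵥ u (t + 1) + S5 *ᵥ y t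
      + S6 *ᵥ y (t + 1)) :
    ObsSol Astar (S3 + Astar * S4) (S5 + Astar * S6) S4 S6 x u y
      (fun t => x t - S4 *ᵥ u t - S6 *ᵥ y t) := fun t => by
  refine ⟨?_, by beta_reduce; abel⟩
  beta_reduce
  rw [hrec t]
  simp only [add_mulVec, mulVec_sub, ← mulVec_mulVec]
  abel

theorem sub_eq_pow_mulVec_of_recursion {xh z : ℕ → Fin n → ℝ}
    (hrec : ∀ t, x (t + 1) = Astar *ᵥ x t + S3 *ᵥ u t + S4 *ᵥ u (t + 1) + S5 *ᵥ y t
      + S6 *ᵥ y (t + 1))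
    (hobs : ObsSol Astar (S3 + Astar * S4) (S5 + Astar * S6) S4 S6 xh u y z) (t : ℕ) :
    x t - xh t = (Astar ^ t) *ᵥ (x 0 - xh 0) := by
  induction t with
  | zero => simp
  | succ t ih =>
    have hstep : x (t + 1) - xh (t + 1) = Astar *ᵥ (x t - xh t) := by
      rw [(hobs (t + 1)).2, (hobs t).1, hrec t, (hobs t).2]
      simp only [add_mulVec, mulVec_sub, mulVec_add, ← mulVec_mulVec]
      abel
    rw [hstep, ih, mulVec_mulVec, ← pow_succ']

theorem isUIO_of_forall_recursion (hA : SchurStable Astar)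
    (hrec : ∀ x u y d, SigmaSol A B Cm Dm E F x u y d → ∀ t, x (t + 1) = Astar *ᵥ x t
      + S3 *ᵥ u t + S4 *ᵥ u (t + 1) + S5 *ᵥ y t + S6 *ᵥ y (t + 1)) :
    IsUIO A B Cm Dm E F Astar (S3 + Astar * S4) (S5 + Astar * S6) S4 S6 := by
  refine ⟨fun x u y d hsol => ⟨_, obsSol_of_recursion (hrec x u y d hsol)⟩, ?_⟩
  intro x u y d xh z hsol hobs
  exact (hA.tendsto_pow_mulVec _).congr fun t =>
    (sub_eq_pow_mulVec_of_recursion (hrec x u y d hsol) hobs t).symm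

end Observer

section DataDriven

variable {n m p r : ℕ}

def inputStack (x : ℕ → Fin n → ℝ) (u : ℕ → Fin m → ℝ) (d : ℕ → Fin r → ℝ) (t : ℕ) :
    Fin n ⊕ ((Fin m ⊕ Fin m) ⊕ (Fin r ⊕ Fin r)) → ℝ
  | Sum.inl a => x t a
  | Sum.inr (Sum.inl (Sum.inl a)) => u t a
  | Sum.inr (Sum.inl (Sum.inr a)) => u (t + 1) a
  | Sum.inr (Sum.inr (Sum.inl a)) => d t a
  | Sum.inr (Sum.inr (Sum.inr a)) => d (t + 1) a

def oneStep (A : Matrix (Fin n) (Fin n) ℝ) (B : Matrix (Fin n) (Fin m) ℝ)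
    (Cm : Matrix (Fin p) (Fin n) ℝ) (Dm : Matrix (Fin p) (Fin m) ℝ)
    (E : Matrix (Fin n) (Fin r) ℝ) (F : Matrix (Fin p) (Fin r) ℝ) :
    (Fin n ⊕ ((Fin m ⊕ Fin m) ⊕ (Fin r ⊕ Fin r)) → ℝ) →ₗ[ℝ] (RowIdx n m p → ℝ) where
  toFun w :=
    let x₀ := w ∘ Sum.inl
    let u₀ := w ∘ Sum.inr ∘ Sum.inl ∘ Sum.inl
    let u₁ := w ∘ Sum.inr ∘ Sum.inl ∘ Sum.inr
    let d₀ := w ∘ Sum.inr ∘ Sum.inr ∘ Sum.inl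
    let d₁ := w ∘ Sum.inr ∘ Sum.inr ∘ Sum.inr
    let x₁ := A *ᵥ x₀ + B *ᵥ u₀ + E *ᵥ d₀
    Sum.elim (Sum.elim x₀ x₁)
      (Sum.elim (Sum.elim u₀ u₁) (Sum.elim (Cm *ᵥ x₀ + Dm *ᵥ u₀ + F *ᵥ d₀)
        (Cm *ᵥ x₁ + Dm *ᵥ u₁ + F *ᵥ d₁)))
  map_add' w w' := by
    ext ((a | a) | ((a | a) | (a | a))) <;> simp [Pi.add_comp, mulVec_add] <;> ring
  map_smul' c w := by
    ext ((a | a) | ((a | a) | (a | a))) <;> simp [Pi.smul_comp, mulVec_smul, mulVec_add] <;> ring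

variable {A : Matrix (Fin n) (Fin n) ℝ} {B : Matrix (Fin n) (Fin m) ℝ}
  {Cm : Matrix (Fin p) (Fin n) ℝ} {Dm : Matrix (Fin p) (Fin m) ℝ}
  {E : Matrix (Fin n) (Fin r) ℝ} {F : Matrix (Fin p) (Fin r) ℝ}
  {x : ℕ → Fin n → ℝ} {u : ℕ → Fin m → ℝ} {y : ℕ → Fin p → ℝ} {d : ℕ → Fin r → ℝ}

theorem stackVec_eq_oneStep {t : ℕ}
    (hx : x (t + 1) = A *ᵥ x t + B *ᵥ u t + E *ᵥ d t)
    (hy₀ : y t = Cm *ᵥ x t + Dm *ᵥ u t + F *ᵥ d t)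
    (hy₁ : y (t + 1) = Cm *ᵥ x (t + 1) + Dm *ᵥ u (t + 1) + F *ᵥ d (t + 1)) :
    stackVec x u y t = oneStep A B Cm Dm E F (inputStack x u d t) := by
  ext ((a | a) | ((a | a) | (a | a))) <;>
    simp [stackVec, oneStep, inputStack, Function.comp_def, hx, hy₀, hy₁]

theorem Matrix.of_mulVec_eq_sum {R ι κ : Type*} [CommSemiring R] [Fintype κ] (f : κ → ι → R)
    (c : κ → R) :
    (Matrix.of fun i j => f j i) *ᵥ c = ∑ j, c j • f j := by
  ext i
  simp [mulVec, dotProduct, mul_comm]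

theorem Matrix.range_mulVecLin_eq_top_of_rank_eq_card {K ι κ : Type*} [Field K] [Fintype ι]
    [Fintype κ] (H : Matrix ι κ K) (h : H.rank = Fintype.card ι) :
    LinearMap.range H.mulVecLin = ⊤ :=
  Submodule.eq_top_of_finrank_eq (by rw [Module.finrank_fintype_fun_eq_card]; exact h)

variable {T : ℕ} {xd : ℕ → Fin n → ℝ} {ud : ℕ → Fin m → ℝ} {yd : ℕ → Fin p → ℝ}
  {dd : ℕ → Fin r → ℝ}

theorem PhiD_mulVecLin_eq_comp
    (hgen1 : ∀ t : ℕ, t + 2 ≤ T →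
      xd (t + 1) = A.mulVec (xd t) + B.mulVec (ud t) + E.mulVec (dd t))
    (hgen2 : ∀ t : ℕ, t + 1 ≤ T →
      yd t = Cm.mulVec (xd t) + Dm.mulVec (ud t) + F.mulVec (dd t)) :
    (PhiD T xd ud yd).mulVecLin = oneStep A B Cm Dm E F ∘ₗ (HistMat T xd ud dd).mulVecLin := by
  have hcol (j : Fin (T - 1)) :
      stackVec xd ud yd j = oneStep A B Cm Dm E F (inputStack xd ud dd j) :=
    stackVec_eq_oneStep (hgen1 j (by omega)) (hgen2 j (by omega)) (hgen2 (j + 1) (by omega))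
  have hPhiD : PhiD T xd ud yd = Matrix.of fun i (j : Fin (T - 1)) => stackVec xd ud yd j i := by
    ext ((a | a) | ((a | a) | (a | a))) j <;> rfl
  have hHist :
      HistMat T xd ud dd = Matrix.of fun i (j : Fin (T - 1)) => inputStack xd ud dd j i := by
    ext (a | ((a | a) | (a | a))) j <;> rfl
  refine LinearMap.ext fun c => ?_
  simp only [LinearMap.comp_apply, mulVecLin_apply, hPhiD, hHist, Matrix.of_mulVec_eq_sum,
    hcol, map_sum, map_smul]

theorem range_PhiD_mulVecLin
    (hgen1 : ∀ t : ℕ, t + 2 ≤ T →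
      xd (t + 1) = A.mulVec (xd t) + B.mulVec (ud t) + E.mulVec (dd t))
    (hgen2 : ∀ t : ℕ, t + 1 ≤ T →
      yd t = Cm.mulVec (xd t) + Dm.mulVec (ud t) + F.mulVec (dd t))
    (hassump : (HistMat T xd ud dd).rank = n + ((m + m) + (r + r))) :
    LinearMap.range (PhiD T xd ud yd).mulVecLin = LinearMap.range (oneStep A B Cm Dm E F) := by
  rw [PhiD_mulVecLin_eq_comp hgen1 hgen2, LinearMap.range_comp_of_range_eq_top]
  exact (HistMat T xd ud dd).range_mulVecLin_eq_top_of_rank_eq_card (by simpa using hassump)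

theorem stackVec_mem_range_PhiD
    (hgen1 : ∀ t : ℕ, t + 2 ≤ T →
      xd (t + 1) = A.mulVec (xd t) + B.mulVec (ud t) + E.mulVec (dd t))
    (hgen2 : ∀ t : ℕ, t + 1 ≤ T →
      yd t = Cm.mulVec (xd t) + Dm.mulVec (ud t) + F.mulVec (dd t))
    (hassump : (HistMat T xd ud dd).rank = n + ((m + m) + (r + r)))
    (hsol : SigmaSol A B Cm Dm E F x u y d) (t : ℕ) :
    stackVec x u y t ∈ LinearMap.range (PhiD T xd ud yd).mulVecLin := by
  rw [range_PhiD_mulVecLin hgen1 hgen2 hassump,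
    stackVec_eq_oneStep (hsol t).1 (hsol t).2 (hsol (t + 1)).2]
  exact LinearMap.mem_range_self _ _

end DataDriven

section Blocks

variable {ι : Type*} {n m p : ℕ}

theorem mulVec_stackVec (Ψ : Matrix ι (RowIdx n m p) ℝ) (x : ℕ → Fin n → ℝ) (u : ℕ → Fin m → ℝ)
    (y : ℕ → Fin p → ℝ) (t : ℕ) :
    Ψ *ᵥ stackVec x u y t =
      Matrix.of (fun i j => Ψ i (Sum.inl (Sum.inl j))) *ᵥ x t
      + Matrix.of (fun i j => Ψ i (Sum.inl (Sum.inr j))) *ᵥ x (t + 1)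
      + Matrix.of (fun i j => Ψ i (Sum.inr (Sum.inl (Sum.inl j)))) *ᵥ u t
      + Matrix.of (fun i j => Ψ i (Sum.inr (Sum.inl (Sum.inr j)))) *ᵥ u (t + 1)
      + Matrix.of (fun i j => Ψ i (Sum.inr (Sum.inr (Sum.inl j)))) *ᵥ y t
      + Matrix.of (fun i j => Ψ i (Sum.inr (Sum.inr (Sum.inr j)))) *ᵥ y (t + 1) := by
  ext i
  simp only [mulVec, dotProduct, Fintype.sum_sum_type, stackVec, Pi.add_apply, of_apply]
  ring

theorem recursion_of_mulVec_stackVec_eq_zero {q : ℕ} {Ψ : Matrix (Fin q) (RowIdx n m p) ℝ}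
    {Ω : Matrix (Fin n) (Fin q) ℝ} {Astar : Matrix (Fin n) (Fin n) ℝ}
    {x : ℕ → Fin n → ℝ} {u : ℕ → Fin m → ℝ} {y : ℕ → Fin p → ℝ} {t : ℕ}
    (hVp : Ω * Matrix.of (fun i j => Ψ i (Sum.inl (Sum.inl j))) = -Astar)
    (hVf : Ω * Matrix.of (fun i j => Ψ i (Sum.inl (Sum.inr j))) = 1)
    (h : Ψ *ᵥ stackVec x u y t = 0) :
    x (t + 1) = Astar *ᵥ x t
      + -(Ω * Matrix.of (fun i j => Ψ i (Sum.inr (Sum.inl (Sum.inl j))))) *ᵥ u t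
      + -(Ω * Matrix.of (fun i j => Ψ i (Sum.inr (Sum.inl (Sum.inr j))))) *ᵥ u (t + 1)
      + -(Ω * Matrix.of (fun i j => Ψ i (Sum.inr (Sum.inr (Sum.inl j))))) *ᵥ y t
      + -(Ω * Matrix.of (fun i j => Ψ i (Sum.inr (Sum.inr (Sum.inr j))))) *ᵥ y (t + 1) := by
  have hΩ := congrArg (Ω *ᵥ ·) h
  simp only [mulVec_stackVec, mulVec_add, mulVec_mulVec, hVp, hVf, mulVec_zero] at hΩ
  simp only [neg_mulVec, one_mulVec] at hΩ ⊢
  linear_combination hΩ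

end Blocks

theorem theorem3_if_constructive_general {n m p r : ℕ}
    (A : Matrix (Fin n) (Fin n) ℝ) (B : Matrix (Fin n) (Fin m) ℝ)
    (Cm : Matrix (Fin p) (Fin n) ℝ) (Dm : Matrix (Fin p) (Fin m) ℝ)
    (E : Matrix (Fin n) (Fin r) ℝ) (F : Matrix (Fin p) (Fin r) ℝ)
    (T : ℕ)
    (xd : ℕ → Fin n → ℝ) (ud : ℕ → Fin m → ℝ) (yd : ℕ → Fin p → ℝ)
    (dd : ℕ → Fin r → ℝ)
    (hgen1 : ∀ t : ℕ, t + 2 ≤ T →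
      xd (t + 1) = A.mulVec (xd t) + B.mulVec (ud t) + E.mulVec (dd t))
    (hgen2 : ∀ t : ℕ, t + 1 ≤ T →
      yd t = Cm.mulVec (xd t) + Dm.mulVec (ud t) + F.mulVec (dd t))
    (hassump : (HistMat T xd ud dd).rank = n + ((m + m) + (r + r)))
    (q : ℕ) (Ψ : Matrix (Fin q) (RowIdx n m p) ℝ)
    (hker : ∀ v : RowIdx n m p → ℝ, Ψ.mulVec v = 0 ↔
      ∃ c : Fin (T - 1) → ℝ, v = (PhiD T xd ud yd).mulVec c)
    (Ω : Matrix (Fin n) (Fin q) ℝ) (Astar : Matrix (Fin n) (Fin n) ℝ)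
    (hA : SchurStable Astar)
    (hVp : Ω * Matrix.of (fun i j => Ψ i (Sum.inl (Sum.inl j))) = -Astar)
    (hVf : Ω * Matrix.of (fun i j => Ψ i (Sum.inl (Sum.inr j))) = 1)
    (S3 : Matrix (Fin n) (Fin m) ℝ)
    (hS3 : S3 = -(Ω * Matrix.of (fun i j => Ψ i (Sum.inr (Sum.inl (Sum.inl j))))))
    (S4 : Matrix (Fin n) (Fin m) ℝ)
    (hS4 : S4 = -(Ω * Matrix.of (fun i j => Ψ i (Sum.inr (Sum.inl (Sum.inr j))))))
    (S5 : Matrix (Fin n) (Fin p) ℝ)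
    (hS5 : S5 = -(Ω * Matrix.of (fun i j => Ψ i (Sum.inr (Sum.inr (Sum.inl j))))))
    (S6 : Matrix (Fin n) (Fin p) ℝ)
    (hS6 : S6 = -(Ω * Matrix.of (fun i j => Ψ i (Sum.inr (Sum.inr (Sum.inr j)))))) :
    IsUIO A B Cm Dm E F Astar (S3 + Astar * S4) (S5 + Astar * S6) S4 S6 := by
  subst hS3 hS4 hS5 hS6
  refine isUIO_of_forall_recursion hA fun x u y d hsol t => ?_
  obtain ⟨c, hc⟩ := stackVec_mem_range_PhiD hgen1 hgen2 hassump hsol t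
  exact recursion_of_mulVec_stackVec_eq_zero hVp hVf ((hker _).2 ⟨c, hc.symm⟩)

theorem theorem3_if_constructive {n m p r : ℕ} (hn : 0 < n) (hm : 0 < m) (hp : 0 < p) (hr : 0 < r)
    (A : Matrix (Fin n) (Fin n) ℝ) (B : Matrix (Fin n) (Fin m) ℝ)
    (Cm : Matrix (Fin p) (Fin n) ℝ) (Dm : Matrix (Fin p) (Fin m) ℝ)
    (E : Matrix (Fin n) (Fin r) ℝ) (F : Matrix (Fin p) (Fin r) ℝ)
    (hEF : (Matrix.fromRows E F).rank = r)
    (T : ℕ) (hT : 2 ≤ T)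
    (xd : ℕ → Fin n → ℝ) (ud : ℕ → Fin m → ℝ) (yd : ℕ → Fin p → ℝ)
    (dd : ℕ → Fin r → ℝ)
    (hgen1 : ∀ t : ℕ, t + 2 ≤ T →
      xd (t + 1) = A.mulVec (xd t) + B.mulVec (ud t) + E.mulVec (dd t))
    (hgen2 : ∀ t : ℕ, t + 1 ≤ T →
      yd t = Cm.mulVec (xd t) + Dm.mulVec (ud t) + F.mulVec (dd t))
    (hassump : (HistMat T xd ud dd).rank = n + ((m + m) + (r + r)))
    (q : ℕ) (Ψ : Matrix (Fin q) (RowIdx n m p) ℝ)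
    (hker : ∀ v : RowIdx n m p → ℝ, Ψ.mulVec v = 0 ↔
      ∃ c : Fin (T - 1) → ℝ, v = (PhiD T xd ud yd).mulVec c)
    (Ω : Matrix (Fin n) (Fin q) ℝ) (Astar : Matrix (Fin n) (Fin n) ℝ)
    (hA : SchurStable Astar)
    (hVp : Ω * Matrix.of (fun i j => Ψ i (Sum.inl (Sum.inl j))) = -Astar)
    (hVf : Ω * Matrix.of (fun i j => Ψ i (Sum.inl (Sum.inr j))) = 1)
    (S3 : Matrix (Fin n) (Fin m) ℝ)
    (hS3 : S3 = -(Ω * Matrix.of (fun i j => Ψ i (Sum.inr (Sum.inl (Sum.inl j))))))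
    (S4 : Matrix (Fin n) (Fin m) ℝ)
    (hS4 : S4 = -(Ω * Matrix.of (fun i j => Ψ i (Sum.inr (Sum.inl (Sum.inr j))))))
    (S5 : Matrix (Fin n) (Fin p) ℝ)
    (hS5 : S5 = -(Ω * Matrix.of (fun i j => Ψ i (Sum.inr (Sum.inr (Sum.inl j))))))
    (S6 : Matrix (Fin n) (Fin p) ℝ)
    (hS6 : S6 = -(Ω * Matrix.of (fun i j => Ψ i (Sum.inr (Sum.inr (Sum.inr j)))))) :
    IsUIO A B Cm Dm E F Astar (S3 + Astar * S4) (S5 + Astar * S6) S4 S6 :=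
  theorem3_if_constructive_general A B Cm Dm E F T xd ud yd dd hgen1 hgen2 hassump q Ψ hker Ω Astar
    hA hVp hVf S3 hS3 S4 hS4 S5 hS5 S6 hS6
end
end

section
/- (Error dynamics, from the proof of Proposition 2) Suppose the observer candidate Σ̂ is an acceptor for the system Σ. Then for every solution (x, u, y, d) of Σ and every solution (x̂, u, y, z) of Σ̂ with the same u and y, the error e(t) = x(t) − x̂(t) satisfies e(t+1) = A_UIO e(t) for all t ∈ ℕ. -/
open Matrix Filter

noncomputable section

namespace ObsSol

variable {n m p : ℕ} {Auio : Matrix (Fin n) (Fin n) ℝ} {Bu : Matrix (Fin n) (Fin m) ℝ}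
  {By : Matrix (Fin n) (Fin p) ℝ} {Du : Matrix (Fin n) (Fin m) ℝ} {Dy : Matrix (Fin n) (Fin p) ℝ}
  {u : ℕ → Fin m → ℝ} {y : ℕ → Fin p → ℝ} {xh₁ xh₂ z₁ z₂ : ℕ → Fin n → ℝ}

theorem sub_eq_sub_state (h₁ : ObsSol Auio Bu By Du Dy xh₁ u y z₁)
    (h₂ : ObsSol Auio Bu By Du Dy xh₂ u y z₂) (t : ℕ) :
    xh₁ t - xh₂ t = z₁ t - z₂ t := by
  rw [(h₁ t).2, (h₂ t).2]
  abel

theorem sub_succ_eq_mulVec_sub (h₁ : ObsSol Auio Bu By Du Dy xh₁ u y z₁)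
    (h₂ : ObsSol Auio Bu By Du Dy xh₂ u y z₂) (t : ℕ) :
    xh₁ (t + 1) - xh₂ (t + 1) = Auio *ᵥ (xh₁ t - xh₂ t) := by
  rw [sub_eq_sub_state h₁ h₂, sub_eq_sub_state h₁ h₂, (h₁ t).1, (h₂ t).1, mulVec_sub]
  abel

end ObsSol

theorem error_dynamics_general {n m p r : ℕ}
    (A : Matrix (Fin n) (Fin n) ℝ) (B : Matrix (Fin n) (Fin m) ℝ)
    (Cm : Matrix (Fin p) (Fin n) ℝ) (Dm : Matrix (Fin p) (Fin m) ℝ)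
    (E : Matrix (Fin n) (Fin r) ℝ) (F : Matrix (Fin p) (Fin r) ℝ)
    (Auio : Matrix (Fin n) (Fin n) ℝ) (Bu : Matrix (Fin n) (Fin m) ℝ)
    (By : Matrix (Fin n) (Fin p) ℝ) (Du : Matrix (Fin n) (Fin m) ℝ)
    (Dy : Matrix (Fin n) (Fin p) ℝ)
    (hacc : IsAcceptor A B Cm Dm E F Auio Bu By Du Dy)
    (x : ℕ → Fin n → ℝ) (u : ℕ → Fin m → ℝ) (y : ℕ → Fin p → ℝ)
    (d : ℕ → Fin r → ℝ) (xh : ℕ → Fin n → ℝ) (z : ℕ → Fin n → ℝ)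
    (hx : SigmaSol A B Cm Dm E F x u y d)
    (hxh : ObsSol Auio Bu By Du Dy xh u y z) :
    ∀ t : ℕ, x (t + 1) - xh (t + 1) = Auio.mulVec (x t - xh t) := by
  obtain ⟨z', hz'⟩ := hacc x u y d hx
  exact ObsSol.sub_succ_eq_mulVec_sub hz' hxh

theorem error_dynamics {n m p r : ℕ} (hn : 0 < n) (hm : 0 < m) (hp : 0 < p) (hr : 0 < r)
    (A : Matrix (Fin n) (Fin n) ℝ) (B : Matrix (Fin n) (Fin m) ℝ)
    (Cm : Matrix (Fin p) (Fin n) ℝ) (Dm : Matrix (Fin p) (Fin m) ℝ)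
    (E : Matrix (Fin n) (Fin r) ℝ) (F : Matrix (Fin p) (Fin r) ℝ)
    (hEF : (Matrix.fromRows E F).rank = r)
    (Auio : Matrix (Fin n) (Fin n) ℝ) (Bu : Matrix (Fin n) (Fin m) ℝ)
    (By : Matrix (Fin n) (Fin p) ℝ) (Du : Matrix (Fin n) (Fin m) ℝ)
    (Dy : Matrix (Fin n) (Fin p) ℝ)
    (hacc : IsAcceptor A B Cm Dm E F Auio Bu By Du Dy)
    (x : ℕ → Fin n → ℝ) (u : ℕ → Fin m → ℝ) (y : ℕ → Fin p → ℝ)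
    (d : ℕ → Fin r → ℝ) (xh : ℕ → Fin n → ℝ) (z : ℕ → Fin n → ℝ)
    (hx : SigmaSol A B Cm Dm E F x u y d)
    (hxh : ObsSol Auio Bu By Du Dy xh u y z) :
    ∀ t : ℕ, x (t + 1) - xh (t + 1) = Auio.mulVec (x t - xh t) :=
  error_dynamics_general A B Cm Dm E F Auio Bu By Du Dy hacc x u y d xh z hx hxh
end
end

section
/- (Degree bound on T(z), from the proof of Proposition 1) Let G(z) = [[zI_n − A, −B, 0], [−C, −D, I_p]] ∈ ℝ[z]^{(n+p)×(n+m+p)}. If T(z) ∈ ℝ[z]^{n×(n+p−r)} is a polynomial matrix such that every entry of the product T(z) · [M_E M_F] · G(z) has degree at most 1, then every entry of T(z) has degree at most 1, i.e., T(z) = T₀ + z T₁ for some real matrices T₀, T₁ ∈ ℝ^{n×(n+p−r)}. -/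
open Matrix Filter

noncomputable section

/-!
Write `M = [M_E M_F]` and let `t_k` be the vector of degree-`k` coefficients of a row of `T(z)`.
The last `p` columns of `T M G` are `T M_F`, the first `n` are `z T M_E - T (M_E A + M_F C)`.
Comparing coefficients of degree `k ≥ 2` and `k + 1` gives `t_k M_F = 0` and
`t_k M_E = t_{k+1} (M_E A + M_F C)`. So if `t_{k+1} = 0` then `t_k M = 0`, hence `t_k = 0`
because `M` has full row rank; descending from the top degree, `t_k = 0` for all `k ≥ 2`.
-/

open Polynomial

namespace Matrix

theorem linearIndependent_row_of_rank_eq_card {K m n : Type*} [Field K] [Fintype m]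
    [Fintype n] {M : Matrix m n K} (h : M.rank = Fintype.card m) : LinearIndependent K M.row := by
  rw [linearIndependent_iff_card_eq_finrank_span, ← h, M.rank_eq_finrank_span_row, Set.finrank]

section PolynomialMatrix

variable {R : Type*} [CommRing R] {ι κ α β : Type*}

theorem eq_map_C_add_X_smul_map_C_of_degree_le_one {T : Matrix ι κ R[X]}
    (h : ∀ i l, (T i l).degree ≤ 1) :
    T = (T.map fun q => q.coeff 0).map C + (X : R[X]) • (T.map fun q => q.coeff 1).map C := by
  refine Matrix.ext fun i l => ?_
  simp only [add_apply, smul_apply, map_apply, smul_eq_mul]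
  conv_lhs => rw [eq_X_add_C_of_degree_le_one (h i l)]
  ring

variable [Fintype κ]

theorem coeff_mul_map_C (T : Matrix ι κ R[X]) (M : Matrix κ α R) (i : ι) (j : α) (k : ℕ) :
    ((T * M.map C) i j).coeff k = vecMul (fun l => (T i l).coeff k) M j := by
  simp [Matrix.mul_apply, vecMul, dotProduct, coeff_mul_C]

variable {P N : Matrix κ α R} {Q : Matrix κ β R} {T : Matrix ι κ R[X]}

theorem coeff_eq_zero_of_coeff_succ_eq_zero (hPQ : LinearIndependent R (fromCols P Q).row)
    (hQ : ∀ i j, ((T * Q.map C) i j).degree ≤ 1)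
    (hP : ∀ i j, ((T * ((X : R[X]) • P.map C - N.map C)) i j).degree ≤ 1)
    (i : ι) {k : ℕ} (hk : 2 ≤ k) (hsucc : ∀ l, (T i l).coeff (k + 1) = 0) (l : κ) :
    (T i l).coeff k = 0 := by
  have hhigh : ∀ {k' : ℕ}, k ≤ k' → ∀ {q : R[X]}, q.degree ≤ 1 → q.coeff k' = 0 := fun hk' _ hq =>
    coeff_eq_zero_of_degree_lt (hq.trans_lt (by exact_mod_cast (by omega : 1 < _)))
  have hQk : vecMul (fun l => (T i l).coeff k) Q = 0 := funext fun j => by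
    rw [← coeff_mul_map_C]
    exact hhigh le_rfl (hQ i j)
  have hPk : vecMul (fun l => (T i l).coeff k) P = 0 := funext fun j => by
    have := hhigh k.le_succ (hP i j)
    rwa [Matrix.mul_sub, Matrix.mul_smul, sub_apply, smul_apply, smul_eq_mul, coeff_sub,
      coeff_X_mul, coeff_mul_map_C, coeff_mul_map_C, show (fun l => (T i l).coeff (k + 1)) = 0
      from funext hsucc, zero_vecMul, Pi.zero_apply, sub_zero] at this
  have hk0 : (fun l => (T i l).coeff k) = 0 := vecMul_injective_iff.mpr hPQ <| by
    dsimp only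
    rw [vecMul_fromCols, hPk, hQk, zero_vecMul, Sum.elim_zero_zero]
  exact congrFun hk0 l

theorem degree_le_one_of_degree_mul_le_one (hPQ : LinearIndependent R (fromCols P Q).row)
    (hQ : ∀ i j, ((T * Q.map C) i j).degree ≤ 1)
    (hP : ∀ i j, ((T * ((X : R[X]) • P.map C - N.map C)) i j).degree ≤ 1) (i : ι) (l : κ) :
    (T i l).degree ≤ 1 := by
  set D := Finset.univ.sup fun l => (T i l).natDegree
  have hdesc : ∀ j k, 2 ≤ k → D < k + j → ∀ l, (T i l).coeff k = 0 := by
    intro j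
    induction j with
    | zero => exact fun k _ hD l => coeff_eq_zero_of_natDegree_lt <|
        (Finset.le_sup (f := fun l => (T i l).natDegree) (Finset.mem_univ l)).trans_lt hD
    | succ j ih => exact fun k hk hD =>
        coeff_eq_zero_of_coeff_succ_eq_zero hPQ hQ hP i hk (ih (k + 1) (by omega) (by omega))
  rw [degree_le_iff_coeff_zero]
  intro k hk
  exact hdesc (D + 1) k (by exact_mod_cast hk) (by omega) l

end PolynomialMatrix

theorem fromCols_map_C_mul_fromBlocks {R : Type*} [CommRing R] {k n m p : Type*}
    [Fintype n] [Fintype m] [Fintype p] [DecidableEq n] [DecidableEq p]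
    (A : Matrix n n R) (B : Matrix n m R) (Cm : Matrix p n R) (Dm : Matrix p m R)
    (ME : Matrix k n R) (MF : Matrix k p R) :
    (fromCols ME MF).map C *
        fromBlocks ((X : R[X]) • (1 : Matrix n n R[X]) - A.map C) (fromCols (-B.map C) 0)
          (-Cm.map C) (fromCols (-Dm.map C) 1) =
      fromCols ((X : R[X]) • ME.map C - (ME * A + MF * Cm).map C)
        (fromCols (-(ME * B + MF * Dm).map C) (MF.map C)) := by
  rw [fromCols_map, fromCols_mul_fromBlocks, Matrix.map_add _ (map_add C),
    Matrix.map_add _ (map_add C), Matrix.map_mul, Matrix.map_mul, Matrix.map_mul, Matrix.map_mul]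
  refine Matrix.ext fun i j => ?_
  rcases j with j | j | j <;> simp [Matrix.mul_sub] <;> abel

end Matrix

theorem degree_bound_T_general {n m p r : ℕ}
    (A : Matrix (Fin n) (Fin n) ℝ) (B : Matrix (Fin n) (Fin m) ℝ)
    (Cm : Matrix (Fin p) (Fin n) ℝ) (Dm : Matrix (Fin p) (Fin m) ℝ)
    (ME : Matrix (Fin (n + p - r)) (Fin n) ℝ) (MF : Matrix (Fin (n + p - r)) (Fin p) ℝ)
    (hMrank : (Matrix.fromCols ME MF).rank = n + p - r)
    (Tz : Matrix (Fin n) (Fin (n + p - r)) (Polynomial ℝ))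
    (hdeg : ∀ (i : Fin n) (j : Fin n ⊕ (Fin m ⊕ Fin p)),
      ((Tz * (Matrix.fromCols ME MF).map (Polynomial.C : ℝ →+* Polynomial ℝ) *
        Matrix.fromBlocks
          ((Polynomial.X : Polynomial ℝ) • (1 : Matrix (Fin n) (Fin n) (Polynomial ℝ)) -
            A.map (Polynomial.C : ℝ →+* Polynomial ℝ))
          (Matrix.fromCols (-(B.map (Polynomial.C : ℝ →+* Polynomial ℝ)))
            (0 : Matrix (Fin n) (Fin p) (Polynomial ℝ)))
          (-(Cm.map (Polynomial.C : ℝ →+* Polynomial ℝ)))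
          (Matrix.fromCols (-(Dm.map (Polynomial.C : ℝ →+* Polynomial ℝ)))
            (1 : Matrix (Fin p) (Fin p) (Polynomial ℝ)))) i j).degree ≤ 1) :
    (∀ (i : Fin n) (j : Fin (n + p - r)), (Tz i j).degree ≤ 1) ∧
    ∃ (T0 T1 : Matrix (Fin n) (Fin (n + p - r)) ℝ),
      Tz = T0.map (Polynomial.C : ℝ →+* Polynomial ℝ) +
        (Polynomial.X : Polynomial ℝ) • T1.map (Polynomial.C : ℝ →+* Polynomial ℝ) := by
  rw [Matrix.mul_assoc, fromCols_map_C_mul_fromBlocks, mul_fromCols, mul_fromCols] at hdeg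
  have hM : LinearIndependent ℝ (fromCols ME MF).row :=
    linearIndependent_row_of_rank_eq_card (by rw [hMrank, Fintype.card_fin])
  have hTz : ∀ i l, (Tz i l).degree ≤ 1 :=
    degree_le_one_of_degree_mul_le_one hM (fun i j => by simpa using hdeg i (.inr (.inr j)))
      (fun i j => by simpa using hdeg i (.inl j))
  exact ⟨hTz, _, _, eq_map_C_add_X_smul_map_C_of_degree_le_one hTz⟩

theorem degree_bound_T {n m p r : ℕ} (hn : 0 < n) (hm : 0 < m) (hp : 0 < p) (hr : 0 < r)
    (A : Matrix (Fin n) (Fin n) ℝ) (B : Matrix (Fin n) (Fin m) ℝ)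
    (Cm : Matrix (Fin p) (Fin n) ℝ) (Dm : Matrix (Fin p) (Fin m) ℝ)
    (E : Matrix (Fin n) (Fin r) ℝ) (F : Matrix (Fin p) (Fin r) ℝ)
    (hEF : (Matrix.fromRows E F).rank = r)
    (ME : Matrix (Fin (n + p - r)) (Fin n) ℝ) (MF : Matrix (Fin (n + p - r)) (Fin p) ℝ)
    (hMrank : (Matrix.fromCols ME MF).rank = n + p - r)
    (hMker : ∀ v : Fin n ⊕ Fin p → ℝ,
      (Matrix.fromCols ME MF).mulVec v = 0 ↔
        ∃ c : Fin r → ℝ, v = (Matrix.fromRows E F).mulVec c)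
    (Tz : Matrix (Fin n) (Fin (n + p - r)) (Polynomial ℝ))
    (hdeg : ∀ (i : Fin n) (j : Fin n ⊕ (Fin m ⊕ Fin p)),
      ((Tz * (Matrix.fromCols ME MF).map (Polynomial.C : ℝ →+* Polynomial ℝ) *
        Matrix.fromBlocks
          ((Polynomial.X : Polynomial ℝ) • (1 : Matrix (Fin n) (Fin n) (Polynomial ℝ)) -
            A.map (Polynomial.C : ℝ →+* Polynomial ℝ))
          (Matrix.fromCols (-(B.map (Polynomial.C : ℝ →+* Polynomial ℝ)))
            (0 : Matrix (Fin n) (Fin p) (Polynomial ℝ)))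
          (-(Cm.map (Polynomial.C : ℝ →+* Polynomial ℝ)))
          (Matrix.fromCols (-(Dm.map (Polynomial.C : ℝ →+* Polynomial ℝ)))
            (1 : Matrix (Fin p) (Fin p) (Polynomial ℝ)))) i j).degree ≤ 1) :
    (∀ (i : Fin n) (j : Fin (n + p - r)), (Tz i j).degree ≤ 1) ∧
    ∃ (T0 T1 : Matrix (Fin n) (Fin (n + p - r)) ℝ),
      Tz = T0.map (Polynomial.C : ℝ →+* Polynomial ℝ) +
        (Polynomial.X : Polynomial ℝ) • T1.map (Polynomial.C : ℝ →+* Polynomial ℝ) :=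
  degree_bound_T_general A B Cm Dm ME MF hMrank Tz hdeg
end
end
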